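/- arXiv:1302.3092 — 3 statements merged into one kernel-verified Lean document; each statement's English description precedes it below -/
import Mathlib

section
/- For the PCDM algorithm applied to minimizing a convex f with coordinate-wise Lipschitz gradient over U = U¹×…×U^M, the key recursion holds: r_{k+1}² ≤ r_k² − 2(f(u_{k+1}) − f(u_k)) + (2/M)⟨∇f(u_k), u_* − u_k⟩, where r_k = ‖u_k − u_*‖₁ and u_* is a minimizer. -/
open scoped RealInnerProductSpace

noncomputable abbrev FullSpace (M : ℕ) (n : Fin M → ℕ) :=
  PiLp 2 (fun i : Fin M => EuclideanSpace ℝ (Fin (n i)))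

noncomputable def blockEmb {M : ℕ} {n : Fin M → ℕ} (i : Fin M)
    (h : EuclideanSpace ℝ (Fin (n i))) : FullSpace M n :=
  (WithLp.equiv 2 _).symm (Pi.single i h)

noncomputable def norm1Sq {M : ℕ} {n : Fin M → ℕ} (L : Fin M → ℝ)
    (u : FullSpace M n) : ℝ := ∑ i, L i * ‖u i‖ ^ 2

/-!
Write `dⁱ = v̄ⁱ − uⁱ_k`, so that `uⁱ_{k+1} = uⁱ_k + dⁱ/M`. Since `v̄ⁱ` minimises the convex
quadratic model `⟪∇ᵢf(u_k), v − uⁱ_k⟫ + (L_i/2)‖v − uⁱ_k‖²` over the convex set `Uⁱ`, the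
first-order optimality condition gives `⟪∇ᵢf(u_k) + L_i dⁱ, u_*ⁱ − v̄ⁱ⟫ ≥ 0`; expanding
`L_i‖uⁱ_{k+1} − u_*ⁱ‖²` and using this bounds it by `L_i‖uⁱ_k − u_*ⁱ‖²` minus `2/M` times the
model value at `v̄ⁱ`, plus `(2/M)⟪∇ᵢf(u_k), u_*ⁱ − uⁱ_k⟫`. On the other hand `u_{k+1}` is the
average of the `M` single-block moves `u_k + eᵢ dⁱ`, so by convexity of `f` and the block
descent lemma, `f(u_{k+1}) − f(u_k)` is at most `1/M` times the sum of the model values.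
-/

open Set

theorem le_add_deriv_add_half_of_deriv_sub_le {φ φ' : ℝ → ℝ} {C : ℝ}
    (hφ : ∀ t, HasDerivAt φ (φ' t) t) (hC : ∀ t ∈ Ico (0 : ℝ) 1, φ' t - φ' 0 ≤ C * t) :
    φ 1 ≤ φ 0 + φ' 0 + C / 2 := by
  have hB (t : ℝ) : HasDerivAt (fun s => φ 0 + φ' 0 * s + C / 2 * s ^ 2) (φ' 0 + C * t) t :=
    ((((hasDerivAt_id' t).const_mul (φ' 0)).const_add (φ 0)).add
      ((hasDerivAt_pow 2 t).const_mul (C / 2))).congr_deriv (by ring)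
  have := image_le_of_deriv_right_le_deriv_boundary (a := 0) (b := 1)
    (fun t _ => (hφ t).continuousAt.continuousWithinAt) (fun t _ => (hφ t).hasDerivWithinAt)
    (by simp) (fun t _ => (hB t).continuousAt.continuousWithinAt)
    (fun t _ => (hB t).hasDerivWithinAt) (fun t ht => by linarith [hC t ht])
    (right_mem_Icc.2 zero_le_one)
  simpa using this

theorem ConvexOn.map_add_inv_card_smul_sum_le {E : Type*} [AddCommGroup E] [Module ℝ E]
    {f : E → ℝ} (hf : ConvexOn ℝ univ f) {ι : Type*} [Fintype ι] [Nonempty ι] (x : E)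
    (e : ι → E) :
    f (x + (Fintype.card ι : ℝ)⁻¹ • ∑ i, e i) ≤ (Fintype.card ι : ℝ)⁻¹ * ∑ i, f (x + e i) := by
  have hN : (Fintype.card ι : ℝ) ≠ 0 := Nat.cast_ne_zero.2 Fintype.card_ne_zero
  have hmean : x + (Fintype.card ι : ℝ)⁻¹ • ∑ i, e i =
      ∑ i, (Fintype.card ι : ℝ)⁻¹ • (x + e i) := by
    rw [← Finset.smul_sum, Finset.sum_add_distrib, Finset.sum_const, Finset.card_univ, smul_add,
      ← Nat.cast_smul_eq_nsmul ℝ, smul_smul, inv_mul_cancel₀ hN, one_smul]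
  rw [hmean, Finset.mul_sum]
  exact hf.map_sum_le (fun _ _ => by positivity) (by simp [hN]) fun _ _ => mem_univ _

section InnerProductSpace

variable {E : Type*} [NormedAddCommGroup E] [InnerProductSpace ℝ E]

theorem hasFDerivAt_inner_sub_add_mul_norm_sub_sq (g x y : E) (L : ℝ) :
    HasFDerivAt (fun w => ⟪g, w - x⟫ + L / 2 * ‖w - x‖ ^ 2)
      (innerSL ℝ (g + L • (y - x))) y := by
  have hsub : HasFDerivAt (fun w : E => w - x) (ContinuousLinearMap.id ℝ E) y :=
    (hasFDerivAt_id y).sub_const x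
  refine (((hasFDerivAt_const g y).inner ℝ hsub).add
    (hsub.norm_sq.const_mul (L / 2))).congr_fderiv ?_
  ext v
  simp
  ring

theorem IsMinOn.inner_add_smul_sub_nonneg {s : Set E} (hs : Convex ℝ s) {g x v w : E} {L : ℝ}
    (hmin : IsMinOn (fun y => ⟪g, y - x⟫ + L / 2 * ‖y - x‖ ^ 2) s v) (hv : v ∈ s) (hw : w ∈ s) :
    0 ≤ ⟪g + L • (v - x), w - v⟫ :=
  hmin.localize.hasFDerivWithinAt_nonneg
    (hasFDerivAt_inner_sub_add_mul_norm_sub_sq g x v L).hasFDerivWithinAt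
    (sub_mem_posTangentConeAt_of_segment_subset (hs.segment_subset hv hw))

theorem mul_norm_add_smul_sub_sq_le {g x v y : E} {L m : ℝ} (hL : 0 ≤ L) (hm₀ : 0 ≤ m)
    (hm₁ : m ≤ 1) (hv : 0 ≤ ⟪g + L • (v - x), y - v⟫) :
    L * ‖x + m • (v - x) - y‖ ^ 2 ≤ L * ‖x - y‖ ^ 2
      - 2 * m * (⟪g, v - x⟫ + L / 2 * ‖v - x‖ ^ 2) + 2 * m * ⟪g, y - x⟫ := by
  have hexpand : ‖x + m • (v - x) - y‖ ^ 2 =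
      ‖x - y‖ ^ 2 - 2 * m * ⟪v - x, y - x⟫ + m ^ 2 * ‖v - x‖ ^ 2 := by
    rw [show x + m • (v - x) - y = m • (v - x) - (y - x) by abel, norm_sub_sq_real, norm_smul,
      real_inner_smul_left, ← norm_neg (x - y), neg_sub, Real.norm_of_nonneg hm₀]
    ring
  rw [show y - v = (y - x) - (v - x) by abel, inner_sub_right, inner_add_left, inner_add_left,
    real_inner_smul_left, real_inner_smul_left, real_inner_self_eq_norm_sq] at hv
  rw [hexpand]
  nlinarith [mul_nonneg (mul_nonneg (mul_nonneg hm₀ (sub_nonneg.2 hm₁)) hL) (sq_nonneg ‖v - x‖)]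

theorem le_add_inner_gradient_add_of_inner_gradient_sub_le [CompleteSpace E] {f : E → ℝ}
    (hf : Differentiable ℝ f) {x v : E} {C : ℝ}
    (hC : ∀ t ∈ Ico (0 : ℝ) 1, ⟪gradient f (x + t • v) - gradient f x, v⟫ ≤ C * t) :
    f (x + v) ≤ f x + ⟪gradient f x, v⟫ + C / 2 := by
  have hline (t : ℝ) :
      HasDerivAt (fun s : ℝ => f (x + s • v)) ⟪gradient f (x + t • v), v⟫ t := by
    have hdir : HasDerivAt (fun s : ℝ => x + s • v) v t := by
      simpa using ((hasDerivAt_id t).smul_const v).const_add x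
    exact (hf _).hasGradientAt.hasFDerivAt.comp_hasDerivAt t hdir
  have := le_add_deriv_add_half_of_deriv_sub_le hline fun t ht => by
    simpa only [zero_smul, add_zero, ← inner_sub_left] using hC t ht
  simpa only [one_smul, zero_smul, add_zero] using this

end InnerProductSpace

namespace PiLp

theorem single_smul {𝕜 ι : Type*} [Semiring 𝕜] [DecidableEq ι] {β : ι → Type*}
    [∀ i, AddCommMonoid (β i)] [∀ i, Module 𝕜 (β i)] (p : ENNReal) (i : ι) (c : 𝕜) (a : β i) :
    single p i (c • a) = c • single p i a := by
  simp_rw [← toLp_single, Pi.single_smul, WithLp.toLp_smul]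

theorem sum_single {ι : Type*} [Fintype ι] [DecidableEq ι] {β : ι → Type*}
    [∀ i, AddCommGroup (β i)] (p : ENNReal) (d : ∀ i, β i) :
    ∑ i, single p i (d i) = WithLp.toLp p d := by
  simp_rw [← toLp_single, ← WithLp.toLp_sum, Finset.univ_sum_single]

variable {ι : Type*} [Fintype ι] [DecidableEq ι] {β : ι → Type*}
  [∀ i, NormedAddCommGroup (β i)] [∀ i, InnerProductSpace ℝ (β i)]

theorem inner_single_right (x : PiLp 2 β) (i : ι) (a : β i) : ⟪x, single 2 i a⟫ = ⟪x i, a⟫ := by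
  rw [PiLp.inner_apply, Finset.sum_eq_single i (fun j _ hj => by simp [hj]) (by simp),
    single_eq_same]

variable [∀ i, CompleteSpace (β i)] {f : PiLp 2 β → ℝ}

theorem le_add_inner_gradient_add_of_norm_gradient_single_sub_le (hf : Differentiable ℝ f)
    {i : ι} {K : ℝ} {x : PiLp 2 β}
    (hLip : ∀ h : β i, ‖gradient f (x + single 2 i h) i - gradient f x i‖ ≤ K * ‖h‖) (h : β i) :
    f (x + single 2 i h) ≤ f x + ⟪gradient f x i, h⟫ + K / 2 * ‖h‖ ^ 2 := by
  have hC (t : ℝ) (ht : t ∈ Ico (0 : ℝ) 1) :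
      ⟪gradient f (x + t • single 2 i h) - gradient f x, single 2 i h⟫ ≤ K * ‖h‖ ^ 2 * t :=
    calc ⟪gradient f (x + t • single 2 i h) - gradient f x, single 2 i h⟫
        = ⟪gradient f (x + single 2 i (t • h)) i - gradient f x i, h⟫ := by
          rw [inner_single_right, single_smul, PiLp.sub_apply]
      _ ≤ ‖gradient f (x + single 2 i (t • h)) i - gradient f x i‖ * ‖h‖ :=
          real_inner_le_norm _ _
      _ ≤ K * ‖t • h‖ * ‖h‖ := by gcongr; exact hLip _
      _ = K * ‖h‖ ^ 2 * t := by rw [norm_smul, Real.norm_of_nonneg ht.1]; ring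
  have := le_add_inner_gradient_add_of_inner_gradient_sub_le hf hC
  rw [inner_single_right] at this
  linarith

theorem map_add_inv_card_smul_toLp_le [Nonempty ι] (hconv : ConvexOn ℝ univ f)
    (hf : Differentiable ℝ f) {K : ι → ℝ} {x : PiLp 2 β}
    (hLip : ∀ i (h : β i), ‖gradient f (x + single 2 i h) i - gradient f x i‖ ≤ K i * ‖h‖)
    (d : ∀ i, β i) :
    f (x + (Fintype.card ι : ℝ)⁻¹ • WithLp.toLp 2 d) ≤
      f x + (Fintype.card ι : ℝ)⁻¹ * ∑ i, (⟪gradient f x i, d i⟫ + K i / 2 * ‖d i‖ ^ 2) := by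
  have hN : (Fintype.card ι : ℝ) ≠ 0 := Nat.cast_ne_zero.2 Fintype.card_ne_zero
  calc f (x + (Fintype.card ι : ℝ)⁻¹ • WithLp.toLp 2 d)
      ≤ (Fintype.card ι : ℝ)⁻¹ * ∑ i, f (x + single 2 i (d i)) := by
        simpa only [sum_single] using hconv.map_add_inv_card_smul_sum_le x fun i => single 2 i (d i)
    _ ≤ (Fintype.card ι : ℝ)⁻¹ * ∑ i, (f x + (⟪gradient f x i, d i⟫ + K i / 2 * ‖d i‖ ^ 2)) := by
        gcongr with i
        linarith [le_add_inner_gradient_add_of_norm_gradient_single_sub_le hf (hLip i) (d i)]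
    _ = f x + (Fintype.card ι : ℝ)⁻¹ * ∑ i, (⟪gradient f x i, d i⟫ + K i / 2 * ‖d i‖ ^ 2) := by
        rw [Finset.sum_add_distrib, Finset.sum_const, Finset.card_univ, nsmul_eq_mul, mul_add,
          inv_mul_cancel_left₀ hN]

end PiLp

theorem pcdm_key_recursion_general {M : ℕ} {n : Fin M → ℕ} (hM : 0 < M)
    (f : FullSpace M n → ℝ) (hconv : ConvexOn ℝ Set.univ f) (hf : Differentiable ℝ f)
    (L : Fin M → ℝ) (hL : ∀ i, 0 < L i)
    (hLip : ∀ (i : Fin M) (u : FullSpace M n) (h : EuclideanSpace ℝ (Fin (n i))),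
      ‖gradient f (u + blockEmb i h) i - gradient f u i‖ ≤ L i * ‖h‖)
    (U : (i : Fin M) → Set (EuclideanSpace ℝ (Fin (n i))))
    (hUconvex : ∀ i, Convex ℝ (U i))
    (ustar : FullSpace M n) (hstarU : ∀ i, ustar i ∈ U i)
    (uk : FullSpace M n)
    (vbar : (i : Fin M) → EuclideanSpace ℝ (Fin (n i)))
    (hvbarU : ∀ i, vbar i ∈ U i)
    (hmin : ∀ i, ∀ v ∈ U i,
      ⟪gradient f uk i, vbar i - uk i⟫ + L i / 2 * ‖vbar i - uk i‖ ^ 2 ≤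
        ⟪gradient f uk i, v - uk i⟫ + L i / 2 * ‖v - uk i‖ ^ 2)
    (uk1 : FullSpace M n)
    (hupd : ∀ i, uk1 i = (1 / (M : ℝ)) • vbar i + (((M : ℝ) - 1) / (M : ℝ)) • uk i) :
    norm1Sq L (uk1 - ustar) ≤ norm1Sq L (uk - ustar) - 2 * (f uk1 - f uk) +
      2 / (M : ℝ) * ⟪gradient f uk, ustar - uk⟫ := by
  have : NeZero M := ⟨hM.ne'⟩
  set q : Fin M → ℝ := fun i => ⟪gradient f uk i, vbar i - uk i⟫ + L i / 2 * ‖vbar i - uk i‖ ^ 2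
  have hstep (i : Fin M) : uk1 i = uk i + (M : ℝ)⁻¹ • (vbar i - uk i) := by
    rw [hupd i]; match_scalars <;> field_simp; ring
  have hblock (i : Fin M) : L i * ‖(uk1 - ustar) i‖ ^ 2 ≤ L i * ‖(uk - ustar) i‖ ^ 2
      - 2 * (M : ℝ)⁻¹ * q i + 2 * (M : ℝ)⁻¹ * ⟪gradient f uk i, ustar i - uk i⟫ := by
    rw [PiLp.sub_apply, PiLp.sub_apply, hstep i]
    exact mul_norm_add_smul_sub_sq_le (hL i).le (by positivity)
      (inv_le_one_of_one_le₀ (by exact_mod_cast hM))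
      (IsMinOn.inner_add_smul_sub_nonneg (hUconvex i) (hmin i) (hvbarU i) (hstarU i))
  have hdescent : f uk1 ≤ f uk + (M : ℝ)⁻¹ * ∑ i, q i := by
    have hmean : uk1 = uk + (M : ℝ)⁻¹ • WithLp.toLp 2 fun i => vbar i - uk i := by
      ext1 i
      exact hstep i
    -- `blockEmb i` unfolds to `PiLp.single 2 i`, so `hLip` applies as it stands.
    simpa only [hmean, Fintype.card_fin] using
      PiLp.map_add_inv_card_smul_toLp_le hconv hf (hLip · uk) fun i => vbar i - uk i
  have hsum := Finset.sum_le_sum fun i (_ : i ∈ Finset.univ) => hblock i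
  rw [Finset.sum_add_distrib, Finset.sum_sub_distrib, ← Finset.mul_sum, ← Finset.mul_sum] at hsum
  simp only [norm1Sq, PiLp.inner_apply, PiLp.sub_apply, div_eq_mul_inv] at hsum ⊢
  linarith

/-- the key recursion of the PCDM convergence analysis. -/
theorem pcdm_key_recursion {M : ℕ} {n : Fin M → ℕ} (hM : 0 < M)
    (f : FullSpace M n → ℝ) (hconv : ConvexOn ℝ Set.univ f) (hf : Differentiable ℝ f)
    (L : Fin M → ℝ) (hL : ∀ i, 0 < L i)
    (hLip : ∀ (i : Fin M) (u : FullSpace M n) (h : EuclideanSpace ℝ (Fin (n i))),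
      ‖gradient f (u + blockEmb i h) i - gradient f u i‖ ≤ L i * ‖h‖)
    (U : (i : Fin M) → Set (EuclideanSpace ℝ (Fin (n i))))
    (hUclosed : ∀ i, IsClosed (U i)) (hUconvex : ∀ i, Convex ℝ (U i))
    (ustar : FullSpace M n) (hstarU : ∀ i, ustar i ∈ U i)
    (hstarmin : ∀ w : FullSpace M n, (∀ i, w i ∈ U i) → f ustar ≤ f w)
    (uk : FullSpace M n) (hukU : ∀ i, uk i ∈ U i)
    (vbar : (i : Fin M) → EuclideanSpace ℝ (Fin (n i)))
    (hvbarU : ∀ i, vbar i ∈ U i)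
    (hmin : ∀ i, ∀ v ∈ U i,
      ⟪gradient f uk i, vbar i - uk i⟫ + L i / 2 * ‖vbar i - uk i‖ ^ 2 ≤
        ⟪gradient f uk i, v - uk i⟫ + L i / 2 * ‖v - uk i‖ ^ 2)
    (uk1 : FullSpace M n)
    (hupd : ∀ i, uk1 i = (1 / (M : ℝ)) • vbar i + (((M : ℝ) - 1) / (M : ℝ)) • uk i) :
    norm1Sq L (uk1 - ustar) ≤ norm1Sq L (uk - ustar) - 2 * (f uk1 - f uk) +
      2 / (M : ℝ) * ⟪gradient f uk, ustar - uk⟫ :=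
  pcdm_key_recursion_general hM f hconv hf L hL hLip U hUconvex ustar hstarU uk vbar hvbarU hmin uk1
    hupd
end

section
/- The PCDM algorithm applied to a convex f with coordinate-wise Lipschitz gradient over a separable convex feasible set achieves the sublinear rate f(u_k) − f* ≤ (M/(M+k))·((1/2)r₀² + f(u₀) − f*), where r₀ = ‖u₀ − u_*‖₁ and f* is the optimal value. -/
/-! Write `Δₖ = f uₖ - f u⋆` and `Rₖ = ‖uₖ - u⋆‖₁²`. The PCDM step is the average of the `M`
single-block steps `uₖ + Eᵢ (v̄ⁱ - uₖⁱ)`, so convexity and the blockwise descent lemma give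
`f uₖ₊₁ ≤ f uₖ + Bₖ / M`, where `Bₖ` is the value at `v̄` of the separable quadratic model of `f`
at `uₖ`. Since each `v̄ⁱ` minimises its block of that model over the convex set `Uⁱ`, the
three-point inequality and the gradient inequality give `Bₖ + ½‖v̄ - u⋆‖₁² ≤ -Δₖ + ½Rₖ`, while
convexity of `‖·‖₁²` gives `M Rₖ₊₁ ≤ ‖v̄ - u⋆‖₁² + (M - 1) Rₖ`. Hence `Vₖ = M Δₖ + (M/2) Rₖ`
satisfies `Vₖ₊₁ + Δₖ ≤ Vₖ`; as `Bₖ ≤ 0` the gaps `Δₖ` do not increase, and summing yields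
`(M + k) Δₖ ≤ V₀`. -/

open scoped RealInnerProductSpace

open Set Filter Topology

theorem image_one_le_of_deriv_le_add_mul {φ φ' : ℝ → ℝ} {c : ℝ}
    (hφ : ∀ t ∈ Icc (0 : ℝ) 1, HasDerivAt φ (φ' t) t)
    (hφ' : ∀ t ∈ Icc (0 : ℝ) 1, φ' t ≤ φ' 0 + c * t) :
    φ 1 ≤ φ 0 + φ' 0 + c / 2 := by
  set ψ : ℝ → ℝ := fun t => φ t - t * φ' 0 - c / 2 * t ^ 2
  have hψ : ∀ t ∈ Icc (0 : ℝ) 1, HasDerivAt ψ (φ' t - φ' 0 - c * t) t := fun t ht =>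
    (((hφ t ht).sub ((hasDerivAt_id' t).mul_const (φ' 0))).sub
      ((hasDerivAt_pow 2 t).const_mul (c / 2))).congr_deriv (by push_cast; ring)
  have hanti : AntitoneOn ψ (Icc 0 1) :=
    antitoneOn_of_hasDerivWithinAt_nonpos (convex_Icc 0 1)
      (fun t ht => (hψ t ht).continuousAt.continuousWithinAt)
      (fun t ht => (hψ t (interior_subset ht)).hasDerivWithinAt)
      (fun t ht => by linarith [hφ' t (interior_subset ht)])
  have := hanti (left_mem_Icc.2 zero_le_one) (right_mem_Icc.2 zero_le_one) zero_le_one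
  simp only [ψ] at this
  linarith

theorem mul_le_of_lyapunov {V Δ : ℕ → ℝ} {m : ℝ} (hstep : ∀ k, V (k + 1) + Δ k ≤ V k)
    (hΔ : Antitone Δ) (hV : ∀ k, m * Δ k ≤ V k) (k : ℕ) : (m + k) * Δ k ≤ V 0 := by
  suffices h : ∀ k : ℕ, V k + k * Δ k ≤ V 0 by linarith [hV k, h k]
  intro k
  induction k with
  | zero => simp
  | succ k ih =>
    have := mul_le_mul_of_nonneg_left (hΔ k.le_succ) (Nat.cast_nonneg (α := ℝ) (k + 1))
    push_cast at this ⊢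
    linarith [hstep k]

section InnerProductSpace

variable {E : Type*} [NormedAddCommGroup E] [InnerProductSpace ℝ E]

theorem hasDerivAt_comp_add_smul [CompleteSpace E] {f : E → ℝ} {x e : E} {t : ℝ}
    (hf : DifferentiableAt ℝ f (x + t • e)) :
    HasDerivAt (fun s : ℝ => f (x + s • e)) ⟪gradient f (x + t • e), e⟫ t := by
  have hline : HasDerivAt (fun s : ℝ => x + s • e) e t := by
    simpa using ((hasDerivAt_id t).smul_const e).const_add x
  rw [inner_gradient_left]
  exact hf.hasFDerivAt.comp_hasDerivAt t hline

theorem ConvexOn.inner_gradient_sub_le [CompleteSpace E] {s : Set E} {f : E → ℝ}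
    (hconv : ConvexOn ℝ s f) {x y : E} (hx : x ∈ s) (hy : y ∈ s)
    (hf : DifferentiableAt ℝ f x) : ⟪gradient f x, y - x⟫ ≤ f y - f x := by
  have hline := hconv.comp_affineMap (AffineMap.lineMap x y)
  have hcomp : f ∘ AffineMap.lineMap x y = fun t : ℝ => f (x + t • (y - x)) := by
    ext t; simp [AffineMap.lineMap_apply, add_comm]
  rw [hcomp] at hline
  have hd := hasDerivAt_comp_add_smul (e := y - x) (t := 0) (by simpa using hf)
  have := hline.le_slope_of_hasDerivAt (by simpa using hx) (by simpa using hy) one_pos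
    (by simpa using hd)
  simpa [slope_def_field] using this

theorem IsMinOn.three_point_inequality {U : Set E} {g x v₀ v : E} {L : ℝ}
    (hmin : IsMinOn (fun w => ⟪g, w - x⟫ + L / 2 * ‖w - x‖ ^ 2) U v₀) (hU : Convex ℝ U)
    (hv₀ : v₀ ∈ U) (hv : v ∈ U) :
    ⟪g, v₀ - x⟫ + L / 2 * ‖v₀ - x‖ ^ 2 + L / 2 * ‖v - v₀‖ ^ 2 ≤
      ⟪g, v - x⟫ + L / 2 * ‖v - x‖ ^ 2 := by
  set A := ⟪g, v - v₀⟫ + L * ⟪v₀ - x, v - v₀⟫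
  set B := L / 2 * ‖v - v₀‖ ^ 2
  have expand : ∀ t : ℝ, ⟪g, v₀ + t • (v - v₀) - x⟫ + L / 2 * ‖v₀ + t • (v - v₀) - x‖ ^ 2 =
      ⟪g, v₀ - x⟫ + L / 2 * ‖v₀ - x‖ ^ 2 + t * A + t ^ 2 * B := fun t => by
    rw [show v₀ + t • (v - v₀) - x = (v₀ - x) + t • (v - v₀) by abel, inner_add_right,
      real_inner_smul_right, norm_add_sq_real, real_inner_smul_right, norm_smul,
      Real.norm_eq_abs, mul_pow, sq_abs]
    ring
  -- first-order optimality of `v₀` in the direction `v - v₀`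
  have hA : 0 ≤ A := by
    have hpos : ∀ t ∈ Ioo (0 : ℝ) 1, 0 ≤ A + t * B := fun t ht => by
      have := isMinOn_iff.1 hmin _ (hU.add_smul_sub_mem hv₀ hv ⟨ht.1.le, ht.2.le⟩)
      simp only [expand] at this
      nlinarith [ht.1]
    have hlim : Tendsto (fun t => A + t * B) (𝓝[>] 0) (𝓝 A) := by
      have hcont : Continuous fun t : ℝ => A + t * B := by fun_prop
      exact (hcont.tendsto' 0 A (by simp)).mono_left nhdsWithin_le_nhds
    exact ge_of_tendsto hlim (by filter_upwards [Ioo_mem_nhdsGT one_pos] using hpos)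
  have hv := expand 1
  simp only [one_smul, one_pow, one_mul, add_sub_cancel] at hv
  linarith

end InnerProductSpace

section Blocks

variable {M : ℕ} {n : Fin M → ℕ}

theorem inner_blockEmb_right (g : FullSpace M n) (i : Fin M) (h : EuclideanSpace ℝ (Fin (n i))) :
    ⟪g, blockEmb i h⟫ = ⟪g i, h⟫ := by
  rw [PiLp.inner_apply, Finset.sum_eq_single i]
  · simp [blockEmb]
  · intro j _ hj
    simp [blockEmb, Pi.single_eq_of_ne hj]
  · simp

theorem smul_blockEmb (t : ℝ) (i : Fin M) (h : EuclideanSpace ℝ (Fin (n i))) :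
    t • blockEmb i h = blockEmb i (t • h) := by
  simp only [blockEmb, WithLp.equiv_symm_apply, ← WithLp.toLp_smul, Pi.single_smul]

theorem sum_blockEmb (y : FullSpace M n) : ∑ i, blockEmb i (y i) = y := by
  simp [blockEmb, ← WithLp.toLp_sum, Finset.univ_sum_single]

def HasBlockLipschitzGradient (f : FullSpace M n → ℝ) (L : Fin M → ℝ) : Prop :=
  ∀ (i : Fin M) (u : FullSpace M n) (h : EuclideanSpace ℝ (Fin (n i))),
    ‖gradient f (u + blockEmb i h) i - gradient f u i‖ ≤ L i * ‖h‖

def IsCoordinateUpdate (f : FullSpace M n → ℝ) (L : Fin M → ℝ)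
    (U : (i : Fin M) → Set (EuclideanSpace ℝ (Fin (n i)))) (x y : FullSpace M n) : Prop :=
  ∀ i, y i ∈ U i ∧
    IsMinOn (fun v => ⟪gradient f x i, v - x i⟫ + L i / 2 * ‖v - x i‖ ^ 2) (U i) (y i)

noncomputable def blockModel (f : FullSpace M n → ℝ) (L : Fin M → ℝ) (x y : FullSpace M n) : ℝ :=
  ∑ i, (⟪gradient f x i, y i - x i⟫ + L i / 2 * ‖y i - x i‖ ^ 2)

variable {f : FullSpace M n → ℝ} {L : Fin M → ℝ}

theorem descent_lemma_blockEmb (hf : Differentiable ℝ f) {i : Fin M} {Lᵢ : ℝ}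
    (hLip : ∀ (u : FullSpace M n) (h : EuclideanSpace ℝ (Fin (n i))),
      ‖gradient f (u + blockEmb i h) i - gradient f u i‖ ≤ Lᵢ * ‖h‖)
    (x : FullSpace M n) (h : EuclideanSpace ℝ (Fin (n i))) :
    f (x + blockEmb i h) ≤ f x + ⟪gradient f x i, h⟫ + Lᵢ / 2 * ‖h‖ ^ 2 := by
  have hφ : ∀ t ∈ Icc (0 : ℝ) 1, HasDerivAt (fun s : ℝ => f (x + s • blockEmb i h))
      ⟪gradient f (x + t • blockEmb i h) i, h⟫ t := fun t _ => by
    rw [← inner_blockEmb_right]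
    exact hasDerivAt_comp_add_smul (hf _)
  have hφ' : ∀ t ∈ Icc (0 : ℝ) 1, ⟪gradient f (x + t • blockEmb i h) i, h⟫ ≤
      ⟪gradient f (x + (0 : ℝ) • blockEmb i h) i, h⟫ + Lᵢ * ‖h‖ ^ 2 * t := fun t ht => by
    have hlip := hLip x (t • h)
    rw [← smul_blockEmb, norm_smul, Real.norm_eq_abs, abs_of_nonneg ht.1] at hlip
    have hcs := real_inner_le_norm (gradient f (x + t • blockEmb i h) i - gradient f x i) h
    rw [inner_sub_left] at hcs
    rw [zero_smul, add_zero]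
    nlinarith [norm_nonneg h]
  have hline := image_one_le_of_deriv_le_add_mul hφ hφ'
  simp only [zero_smul, add_zero, one_smul] at hline
  linarith

theorem norm1Sq_nonneg (hL : ∀ i, 0 ≤ L i) (u : FullSpace M n) : 0 ≤ norm1Sq L u :=
  Finset.sum_nonneg fun i _ => mul_nonneg (hL i) (sq_nonneg _)

theorem convexOn_norm1Sq (hL : ∀ i, 0 ≤ L i) : ConvexOn ℝ univ (norm1Sq (n := n) L) := by
  refine ⟨convex_univ, fun x _ y _ a b ha hb hab => ?_⟩
  have hblock : ∀ i, ‖a • x i + b • y i‖ ^ 2 ≤ a * ‖x i‖ ^ 2 + b * ‖y i‖ ^ 2 := fun i => by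
    simpa using (convexOn_univ_norm.pow (fun _ _ => norm_nonneg _) 2).2
      (mem_univ (x i)) (mem_univ (y i)) ha hb hab
  simp only [norm1Sq, smul_eq_mul, Finset.mul_sum, ← Finset.sum_add_distrib, PiLp.add_apply,
    PiLp.smul_apply]
  exact Finset.sum_le_sum fun i _ => by
    linarith [mul_le_mul_of_nonneg_left (hblock i) (hL i)]

theorem map_add_inv_smul_sub_le (hM : 0 < M) (hconv : ConvexOn ℝ univ f)
    (hf : Differentiable ℝ f) (hLip : HasBlockLipschitzGradient f L) (x y : FullSpace M n) :
    f (x + (M : ℝ)⁻¹ • (y - x)) ≤ f x + (M : ℝ)⁻¹ * blockModel f L x y := by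
  have hM' : (M : ℝ) ≠ 0 := by positivity
  have havg : x + (M : ℝ)⁻¹ • (y - x) = ∑ i, (M : ℝ)⁻¹ • (x + blockEmb i (y i - x i)) := by
    simp only [smul_add, Finset.sum_add_distrib, ← Finset.smul_sum, ← PiLp.sub_apply,
      sum_blockEmb, Finset.sum_const, Finset.card_univ, Fintype.card_fin, ← Nat.cast_smul_eq_nsmul ℝ,
      smul_smul, inv_mul_cancel₀ hM', one_smul]
  calc f (x + (M : ℝ)⁻¹ • (y - x))
      ≤ ∑ i, (M : ℝ)⁻¹ • f (x + blockEmb i (y i - x i)) := by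
        rw [havg]
        exact hconv.map_sum_le (fun _ _ => by positivity) (by simp [hM'])
          (fun _ _ => mem_univ _)
    _ ≤ ∑ i, (M : ℝ)⁻¹ * (f x + (⟪gradient f x i, y i - x i⟫ + L i / 2 * ‖y i - x i‖ ^ 2)) :=
        Finset.sum_le_sum fun i _ => mul_le_mul_of_nonneg_left
          (by linarith [descent_lemma_blockEmb hf (hLip i) x (y i - x i)]) (by positivity)
    _ = f x + (M : ℝ)⁻¹ * blockModel f L x y := by
        simp only [blockModel, ← Finset.mul_sum, Finset.sum_add_distrib, Finset.sum_const,
          Finset.card_univ, Fintype.card_fin, nsmul_eq_mul]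
        field_simp

theorem blockModel_add_le (hconv : ConvexOn ℝ univ f) (hf : Differentiable ℝ f)
    {U : (i : Fin M) → Set (EuclideanSpace ℝ (Fin (n i)))} (hU : ∀ i, Convex ℝ (U i))
    {x y z : FullSpace M n} (hy : IsCoordinateUpdate f L U x y) (hz : ∀ i, z i ∈ U i) :
    blockModel f L x y + norm1Sq L (y - z) / 2 ≤ f z - f x + norm1Sq L (x - z) / 2 := by
  have hblocks := Finset.sum_le_sum fun i (_ : i ∈ Finset.univ) =>
    (hy i).2.three_point_inequality (hU i) (hy i).1 (hz i)
  have hgrad := hconv.inner_gradient_sub_le (mem_univ x) (mem_univ z) (hf x)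
  rw [PiLp.inner_apply] at hgrad
  simp only [blockModel, norm1Sq, Finset.sum_add_distrib, Finset.sum_div, PiLp.sub_apply,
    norm_sub_rev (z _), div_mul_eq_mul_div] at hgrad hblocks ⊢
  linarith

theorem blockModel_nonpos {U : (i : Fin M) → Set (EuclideanSpace ℝ (Fin (n i)))}
    {x y : FullSpace M n} (hx : ∀ i, x i ∈ U i) (hy : IsCoordinateUpdate f L U x y) :
    blockModel f L x y ≤ 0 :=
  Finset.sum_nonpos fun i _ => by simpa using isMinOn_iff.1 (hy i).2 _ (hx i)

theorem map_add_inv_smul_sub_le_self (hM : 0 < M) (hconv : ConvexOn ℝ univ f)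
    (hf : Differentiable ℝ f) (hLip : HasBlockLipschitzGradient f L)
    {U : (i : Fin M) → Set (EuclideanSpace ℝ (Fin (n i)))}
    {x y : FullSpace M n} (hx : ∀ i, x i ∈ U i) (hy : IsCoordinateUpdate f L U x y) :
    f (x + (M : ℝ)⁻¹ • (y - x)) ≤ f x := by
  have hmodel := mul_nonpos_of_nonneg_of_nonpos (inv_nonneg.2 (Nat.cast_nonneg (α := ℝ) M))
    (blockModel_nonpos hx hy)
  linarith [map_add_inv_smul_sub_le hM hconv hf hLip x y]

theorem pcdm_lyapunov_step (hM : 0 < M) (hconv : ConvexOn ℝ univ f) (hf : Differentiable ℝ f)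
    (hL : ∀ i, 0 ≤ L i) (hLip : HasBlockLipschitzGradient f L)
    {U : (i : Fin M) → Set (EuclideanSpace ℝ (Fin (n i)))} (hU : ∀ i, Convex ℝ (U i))
    {x y z : FullSpace M n} (hy : IsCoordinateUpdate f L U x y)
    (hz : ∀ i, z i ∈ U i) :
    M * (f (x + (M : ℝ)⁻¹ • (y - x)) - f z) + M / 2 * norm1Sq L (x + (M : ℝ)⁻¹ • (y - x) - z) ≤
      (M - 1) * (f x - f z) + M / 2 * norm1Sq L (x - z) := by
  have hM' : (0 : ℝ) < M := Nat.cast_pos.2 hM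
  have hvalue : M * f (x + (M : ℝ)⁻¹ • (y - x)) ≤ M * f x + blockModel f L x y := by
    have := mul_le_mul_of_nonneg_left (map_add_inv_smul_sub_le hM hconv hf hLip x y) hM'.le
    rwa [mul_add, mul_inv_cancel_left₀ hM'.ne'] at this
  have hdist : M * norm1Sq L (x + (M : ℝ)⁻¹ • (y - x) - z) ≤
      norm1Sq L (y - z) + (M - 1) * norm1Sq L (x - z) := by
    have := (convexOn_norm1Sq hL).2 (mem_univ (y - z)) (mem_univ (x - z))
      (inv_nonneg.2 hM'.le) (sub_nonneg.2 (inv_le_one_of_one_le₀ (Nat.one_le_cast.2 hM)))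
      (add_sub_cancel _ _)
    rw [show (M : ℝ)⁻¹ • (y - z) + (1 - (M : ℝ)⁻¹) • (x - z) = x + (M : ℝ)⁻¹ • (y - x) - z by
      module, smul_eq_mul, smul_eq_mul] at this
    have := mul_le_mul_of_nonneg_left this hM'.le
    rwa [mul_add, mul_inv_cancel_left₀ hM'.ne', ← mul_assoc, mul_sub, mul_one,
      mul_inv_cancel₀ hM'.ne'] at this
  linarith [blockModel_add_le hconv hf hU hy hz]

end Blocks

theorem pcdm_sublinear_rate_general {M : ℕ} {n : Fin M → ℕ} (hM : 0 < M)
    (f : FullSpace M n → ℝ) (hconv : ConvexOn ℝ Set.univ f) (hf : Differentiable ℝ f)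
    (L : Fin M → ℝ) (hL : ∀ i, 0 < L i)
    (hLip : ∀ (i : Fin M) (u : FullSpace M n) (h : EuclideanSpace ℝ (Fin (n i))),
      ‖gradient f (u + blockEmb i h) i - gradient f u i‖ ≤ L i * ‖h‖)
    (U : (i : Fin M) → Set (EuclideanSpace ℝ (Fin (n i))))
    (hUconvex : ∀ i, Convex ℝ (U i))
    (ustar : FullSpace M n) (hstarU : ∀ i, ustar i ∈ U i)
    (u : ℕ → FullSpace M n) (h0 : ∀ i, u 0 i ∈ U i)
    (vbar : ℕ → (i : Fin M) → EuclideanSpace ℝ (Fin (n i)))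
    (hvbarU : ∀ k i, vbar k i ∈ U i)
    (hmin : ∀ k i, ∀ v ∈ U i,
      ⟪gradient f (u k) i, vbar k i - u k i⟫ + L i / 2 * ‖vbar k i - u k i‖ ^ 2 ≤
        ⟪gradient f (u k) i, v - u k i⟫ + L i / 2 * ‖v - u k i‖ ^ 2)
    (hupd : ∀ k i,
      u (k + 1) i = (1 / (M : ℝ)) • vbar k i + (((M : ℝ) - 1) / (M : ℝ)) • u k i) :
    ∀ k : ℕ, f (u k) - f ustar ≤
      (M : ℝ) / ((M : ℝ) + (k : ℝ)) *
        (1 / 2 * norm1Sq L (u 0 - ustar) + f (u 0) - f ustar) := by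
  have hM' : (0 : ℝ) < M := Nat.cast_pos.2 hM
  have hL' : ∀ i, 0 ≤ L i := fun i => (hL i).le
  have hupd' : ∀ k, u (k + 1) = u k + (M : ℝ)⁻¹ • (WithLp.toLp 2 (vbar k) - u k) := fun k => by
    ext1 i
    rw [hupd k i, PiLp.add_apply, PiLp.smul_apply, PiLp.sub_apply, PiLp.toLp_apply]
    match_scalars <;> field_simp
    ring
  have hfeas : ∀ k i, u k i ∈ U i := by
    intro k
    induction k with
    | zero => exact h0
    | succ k ih =>
      intro i
      rw [hupd']
      exact (hUconvex i).add_smul_sub_mem (ih i) (hvbarU k i)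
        ⟨inv_nonneg.2 hM'.le, inv_le_one_of_one_le₀ ((Nat.one_le_cast (α := ℝ)).2 hM)⟩
  have hvbar : ∀ k, IsCoordinateUpdate f L U (u k) (WithLp.toLp 2 (vbar k)) :=
    fun k i => ⟨hvbarU k i, isMinOn_iff.2 (hmin k i)⟩
  have hdecr : Antitone fun k => f (u k) - f ustar := antitone_nat_of_succ_le fun k => by
    rw [hupd']
    linarith [map_add_inv_smul_sub_le_self hM hconv hf hLip (hfeas k) (hvbar k)]
  intro k
  have hrate := mul_le_of_lyapunov
    (V := fun k => M * (f (u k) - f ustar) + M / 2 * norm1Sq L (u k - ustar))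
    (fun k => by
      have := pcdm_lyapunov_step hM hconv hf hL' hLip hUconvex (hvbar k) hstarU
      rw [← hupd'] at this
      linarith)
    hdecr (fun k => le_add_of_nonneg_right (mul_nonneg (by positivity) (norm1Sq_nonneg hL' _))) k
  rw [div_mul_eq_mul_div, le_div_iff₀ (by positivity)]
  linarith

/-- Theorem 1: sublinear convergence rate of PCDM. -/
theorem pcdm_sublinear_rate {M : ℕ} {n : Fin M → ℕ} (hM : 0 < M)
    (f : FullSpace M n → ℝ) (hconv : ConvexOn ℝ Set.univ f) (hf : Differentiable ℝ f)
    (L : Fin M → ℝ) (hL : ∀ i, 0 < L i)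
    (hLip : ∀ (i : Fin M) (u : FullSpace M n) (h : EuclideanSpace ℝ (Fin (n i))),
      ‖gradient f (u + blockEmb i h) i - gradient f u i‖ ≤ L i * ‖h‖)
    (U : (i : Fin M) → Set (EuclideanSpace ℝ (Fin (n i))))
    (hUclosed : ∀ i, IsClosed (U i)) (hUconvex : ∀ i, Convex ℝ (U i))
    (ustar : FullSpace M n) (hstarU : ∀ i, ustar i ∈ U i)
    (hstarmin : ∀ w : FullSpace M n, (∀ i, w i ∈ U i) → f ustar ≤ f w)
    (u : ℕ → FullSpace M n) (h0 : ∀ i, u 0 i ∈ U i)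
    (vbar : ℕ → (i : Fin M) → EuclideanSpace ℝ (Fin (n i)))
    (hvbarU : ∀ k i, vbar k i ∈ U i)
    (hmin : ∀ k i, ∀ v ∈ U i,
      ⟪gradient f (u k) i, vbar k i - u k i⟫ + L i / 2 * ‖vbar k i - u k i‖ ^ 2 ≤
        ⟪gradient f (u k) i, v - u k i⟫ + L i / 2 * ‖v - u k i‖ ^ 2)
    (hupd : ∀ k i,
      u (k + 1) i = (1 / (M : ℝ)) • vbar k i + (((M : ℝ) - 1) / (M : ℝ)) • u k i) :
    ∀ k : ℕ, f (u k) - f ustar ≤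
      (M : ℝ) / ((M : ℝ) + (k : ℝ)) *
        (1 / 2 * norm1Sq L (u 0 - ustar) + f (u 0) - f ustar) :=
  pcdm_sublinear_rate_general hM f hconv hf L hL hLip U hUconvex ustar hstarU u h0 vbar hvbarU hmin
    hupd
end

section
/- If additionally f is strongly convex with parameter σ₁ ∈ (0,1] with respect to ‖·‖₁, the PCDM algorithm converges linearly: f(u_k) − f* ≤ (1 − 2σ₁/(M(1+σ₁)))^k · ((1/2)r₀² + f(u₀) − f*). -/
open scoped RealInnerProductSpace

/-!
Track `Φ(u) = ½‖u - u*‖₁² + f(u) - f*`. A PCDM step `u + (1/M)(v̄ - u)` is the average over `i`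
of the single-block steps `u + Eᵢ(v̄ⁱ - uⁱ)`, so convexity and the block descent lemma bound
`f(u_{k+1})`; together with the three-point property of each block prox step and the exact
expansion of `‖·‖₁²` along a segment this gives `Φ(u_{k+1}) ≤ Φ(u_k) - (1/M)⟨∇f(u_k), u_k - u*⟩`.
By strong convexity the inner product is at least `f(u_k) - f* + (σ₁/2)‖u_k - u*‖₁²`, and since
also `(σ₁/2)‖u_k - u*‖₁² ≤ f(u_k) - f*` (first-order optimality of `u*`), this is at least
`2σ₁/(1+σ₁) · Φ(u_k)`.
-/

section FirstOrder
variable {E : Type*} [NormedAddCommGroup E] [NormedSpace ℝ E]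

theorem IsMinOn.hasFDerivAt_apply_sub_nonneg {f : E → ℝ} {f' : E →L[ℝ] ℝ} {s : Set E}
    {a y : E} (h : IsMinOn f s a) (hs : Convex ℝ s) (ha : a ∈ s) (hy : y ∈ s)
    (hf : HasFDerivAt f f' a) : 0 ≤ f' (y - a) :=
  h.localize.hasFDerivWithinAt_nonneg hf.hasFDerivWithinAt
    (sub_mem_posTangentConeAt_of_segment_subset (hs.segment_subset ha hy))
end FirstOrder

section InnerProduct
variable {F : Type*} [NormedAddCommGroup F] [InnerProductSpace ℝ F]

theorem hasDerivAt_apply_add_smul [CompleteSpace F] {f : F → ℝ} {x v : F} {t : ℝ}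
    (hf : DifferentiableAt ℝ f (x + t • v)) :
    HasDerivAt (fun s : ℝ => f (x + s • v)) ⟪gradient f (x + t • v), v⟫ t := by
  have hline : HasDerivAt (fun s : ℝ => x + s • v) v t := by
    simpa using ((hasDerivAt_id t).smul_const v).const_add x
  simpa [Function.comp_def] using hf.hasGradientAt.hasFDerivAt.comp_hasDerivAt t hline

theorem apply_add_le_of_inner_gradient_sub_le [CompleteSpace F] {f : F → ℝ}
    (hf : Differentiable ℝ f) (x v : F) {K : ℝ}
    (hK : ∀ t ∈ Set.Ioo (0 : ℝ) 1, ⟪gradient f (x + t • v) - gradient f x, v⟫ ≤ t * K) :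
    f (x + v) ≤ f x + ⟪gradient f x, v⟫ + K / 2 := by
  set φ : ℝ → ℝ := fun t => f (x + t • v) - t * ⟪gradient f x, v⟫ - t ^ 2 / 2 * K
  have hφ : ∀ t, HasDerivAt φ (⟪gradient f (x + t • v) - gradient f x, v⟫ - t * K) t := by
    intro t
    refine (((hasDerivAt_apply_add_smul (hf _)).sub ((hasDerivAt_id t).mul_const _)).sub
      (((hasDerivAt_pow 2 t).div_const 2).mul_const K)).congr_deriv ?_
    rw [inner_sub_left]
    norm_num
  have hanti : AntitoneOn φ (Set.Icc 0 1) := by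
    refine antitoneOn_of_deriv_nonpos (convex_Icc 0 1)
      (fun t _ => (hφ t).continuousAt.continuousWithinAt)
      (fun t _ => (hφ t).differentiableAt.differentiableWithinAt) fun t ht => ?_
    rw [interior_Icc] at ht
    rw [(hφ t).deriv]
    linarith [hK t ht]
  have h01 := hanti (by simp) (by simp) zero_le_one
  simp only [φ, one_smul, zero_smul, add_zero] at h01
  linarith

theorem IsMinOn.inner_gradient_sub_nonneg [CompleteSpace F] {f : F → ℝ} {s : Set F} {a y : F}
    (h : IsMinOn f s a) (hs : Convex ℝ s) (ha : a ∈ s) (hy : y ∈ s)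
    (hf : DifferentiableAt ℝ f a) : 0 ≤ ⟪gradient f a, y - a⟫ := by
  rw [inner_gradient_left]
  exact h.hasFDerivAt_apply_sub_nonneg hs ha hy hf.hasFDerivAt

theorem IsMinOn.three_point {U : Set F} {g x w : F} {c : ℝ}
    (hmin : IsMinOn (fun v => ⟪g, v - x⟫ + c / 2 * ‖v - x‖ ^ 2) U w) (hU : Convex ℝ U)
    (hw : w ∈ U) {v : F} (hv : v ∈ U) :
    ⟪g, w - x⟫ + c / 2 * ‖w - x‖ ^ 2 + c / 2 * ‖v - w‖ ^ 2 ≤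
      ⟪g, v - x⟫ + c / 2 * ‖v - x‖ ^ 2 := by
  have hsub := (hasFDerivAt_id (𝕜 := ℝ) w).sub_const x
  have hvi := hmin.hasFDerivAt_apply_sub_nonneg hU hw hv
    ((((innerSL ℝ g).hasFDerivAt).comp w hsub).add (hsub.norm_sq.const_mul (c / 2)))
  simp only [add_apply, ContinuousLinearMap.comp_apply, smul_apply, innerSL_apply_apply,
    ContinuousLinearMap.id_apply, id_eq, smul_eq_mul, nsmul_eq_mul, Nat.cast_ofNat] at hvi
  have : v - x = (w - x) + (v - w) := by abel
  rw [this, norm_add_sq_real, inner_add_right]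
  linear_combination hvi

end InnerProduct

namespace FullSpace
variable {M : ℕ} {n : Fin M → ℕ}

theorem blockEmb_apply_self (i : Fin M) (h : EuclideanSpace ℝ (Fin (n i))) :
    blockEmb i h i = h := by
  rw [blockEmb, WithLp.equiv_symm_apply, PiLp.toLp_apply, Pi.single_eq_same]

theorem blockEmb_apply_of_ne {i j : Fin M} (hj : j ≠ i) (h : EuclideanSpace ℝ (Fin (n i))) :
    blockEmb i h j = 0 := by
  rw [blockEmb, WithLp.equiv_symm_apply, PiLp.toLp_apply, Pi.single_eq_of_ne hj]

theorem inner_blockEmb (w : FullSpace M n) (i : Fin M) (h : EuclideanSpace ℝ (Fin (n i))) :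
    ⟪w, blockEmb i h⟫ = ⟪w i, h⟫ := by
  rw [PiLp.inner_apply, Fintype.sum_eq_single i fun j hj => by
    rw [blockEmb_apply_of_ne hj, inner_zero_right], blockEmb_apply_self]

theorem blockEmb_smul (i : Fin M) (t : ℝ) (h : EuclideanSpace ℝ (Fin (n i))) :
    blockEmb i (t • h) = t • blockEmb i h := by
  rw [blockEmb, blockEmb, Pi.single_smul, WithLp.equiv_symm_apply, WithLp.toLp_smul]

theorem sum_blockEmb (x : FullSpace M n) : ∑ i, blockEmb i (x i) = x := by
  ext1 j
  rw [WithLp.ofLp_sum, Finset.sum_apply, Fintype.sum_eq_single j fun i hi =>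
    blockEmb_apply_of_ne (Ne.symm hi) _]
  exact blockEmb_apply_self j (x j)

theorem convex_setOf_forall_apply_mem {U : (i : Fin M) → Set (EuclideanSpace ℝ (Fin (n i)))}
    (hU : ∀ i, Convex ℝ (U i)) : Convex ℝ {y : FullSpace M n | ∀ i, y i ∈ U i} :=
  fun _ hx _ hy _ _ ha hb hab i => hU i (hx i) (hy i) ha hb hab

theorem norm1Sq_nonneg {L : Fin M → ℝ} (hL : ∀ i, 0 ≤ L i) (x : FullSpace M n) :
    0 ≤ norm1Sq L x :=
  Finset.sum_nonneg fun i _ => mul_nonneg (hL i) (sq_nonneg _)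

theorem norm1Sq_sub_comm (L : Fin M → ℝ) (x y : FullSpace M n) :
    norm1Sq L (x - y) = norm1Sq L (y - x) := by
  simp only [norm1Sq, PiLp.sub_apply, norm_sub_rev]

theorem norm1Sq_smul_add_smul (L : Fin M → ℝ) (a b : FullSpace M n) (t : ℝ) :
    norm1Sq L ((1 - t) • a + t • b) =
      (1 - t) * norm1Sq L a + t * norm1Sq L b - t * (1 - t) * norm1Sq L (a - b) := by
  simp only [norm1Sq, Finset.mul_sum, ← Finset.sum_sub_distrib, ← Finset.sum_add_distrib]
  refine Finset.sum_congr rfl fun i _ => ?_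
  simp only [PiLp.add_apply, PiLp.smul_apply, PiLp.sub_apply, ← real_inner_self_eq_norm_sq,
    inner_add_left, inner_add_right, inner_sub_left, inner_sub_right, real_inner_smul_left,
    real_inner_smul_right, real_inner_comm (a i) (b i)]
  ring

theorem one_half_mul_norm1Sq (L : Fin M → ℝ) (x : FullSpace M n) :
    1 / 2 * norm1Sq L x = ∑ i, L i / 2 * ‖x i‖ ^ 2 := by
  rw [norm1Sq, Finset.mul_sum]
  exact Finset.sum_congr rfl fun i _ => by ring

theorem pcdm_update_eq (hM : 0 < M) {x y : FullSpace M n}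
    {w : (i : Fin M) → EuclideanSpace ℝ (Fin (n i))}
    (h : ∀ i, y i = (1 / (M : ℝ)) • w i + (((M : ℝ) - 1) / (M : ℝ)) • x i) :
    y = x + (M : ℝ)⁻¹ • (WithLp.toLp 2 w - x) := by
  ext1 i
  have hcoef : ((M : ℝ) - 1) / M = 1 - (M : ℝ)⁻¹ := by field_simp
  rw [h i, hcoef, one_div]
  simp only [PiLp.add_apply, PiLp.smul_apply, PiLp.sub_apply]
  module

theorem pcdm_iterate_mem (hM : 0 < M) {U : (i : Fin M) → Set (EuclideanSpace ℝ (Fin (n i)))}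
    (hU : ∀ i, Convex ℝ (U i)) {u : ℕ → FullSpace M n}
    {vbar : ℕ → (i : Fin M) → EuclideanSpace ℝ (Fin (n i))} (h0 : ∀ i, u 0 i ∈ U i)
    (hvbarU : ∀ k i, vbar k i ∈ U i)
    (hupd : ∀ k i, u (k + 1) i = (1 / (M : ℝ)) • vbar k i + (((M : ℝ) - 1) / (M : ℝ)) • u k i) :
    ∀ k i, u k i ∈ U i := by
  have hM1 : (1 : ℝ) ≤ M := by exact_mod_cast hM
  intro k
  induction k with
  | zero => exact h0
  | succ k ih =>
    intro i
    rw [hupd k i]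
    exact hU i (hvbarU k i) (ih i) (by positivity) (div_nonneg (by linarith) (by positivity))
      (by field_simp; ring)

variable {f : FullSpace M n → ℝ} {L : Fin M → ℝ}

theorem apply_add_blockEmb_le (hf : Differentiable ℝ f) (i : Fin M)
    (hLip : ∀ (u : FullSpace M n) (h : EuclideanSpace ℝ (Fin (n i))),
      ‖gradient f (u + blockEmb i h) i - gradient f u i‖ ≤ L i * ‖h‖)
    (x : FullSpace M n) (h : EuclideanSpace ℝ (Fin (n i))) :
    f (x + blockEmb i h) ≤ f x + ⟪gradient f x i, h⟫ + L i / 2 * ‖h‖ ^ 2 := by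
  have key := apply_add_le_of_inner_gradient_sub_le hf x (blockEmb i h)
    (K := L i * ‖h‖ ^ 2) fun t ht => by
      rw [← blockEmb_smul, inner_blockEmb, PiLp.sub_apply]
      calc _ ≤ ‖gradient f (x + blockEmb i (t • h)) i - gradient f x i‖ * ‖h‖ :=
            real_inner_le_norm _ _
        _ ≤ L i * ‖t • h‖ * ‖h‖ := by gcongr; exact hLip x (t • h)
        _ = t * (L i * ‖h‖ ^ 2) := by rw [norm_smul, Real.norm_of_nonneg ht.1.le]; ring
  rw [inner_blockEmb] at key
  linarith

theorem apply_add_inv_smul_le (hM : 0 < M) (hconv : ConvexOn ℝ Set.univ f)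
    (hf : Differentiable ℝ f)
    (hLip : ∀ (i : Fin M) (u : FullSpace M n) (h : EuclideanSpace ℝ (Fin (n i))),
      ‖gradient f (u + blockEmb i h) i - gradient f u i‖ ≤ L i * ‖h‖)
    (x d : FullSpace M n) :
    f (x + (M : ℝ)⁻¹ • d) ≤ f x + (M : ℝ)⁻¹ * (⟪gradient f x, d⟫ + 1 / 2 * norm1Sq L d) := by
  have hM' : (M : ℝ) ≠ 0 := by positivity
  have hsplit : x + (M : ℝ)⁻¹ • d = ∑ i, (M : ℝ)⁻¹ • (x + blockEmb i (d i)) := by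
    rw [← Finset.smul_sum, Finset.sum_add_distrib, sum_blockEmb, Finset.sum_const,
      Finset.card_univ, Fintype.card_fin, smul_add, ← Nat.cast_smul_eq_nsmul ℝ, smul_smul,
      inv_mul_cancel₀ hM', one_smul]
  calc f (x + (M : ℝ)⁻¹ • d) ≤ ∑ i, (M : ℝ)⁻¹ * f (x + blockEmb i (d i)) := by
        rw [hsplit]
        refine hconv.map_sum_le (fun _ _ => by positivity) ?_ fun _ _ => Set.mem_univ _
        simp [hM']
    _ ≤ ∑ i, (M : ℝ)⁻¹ * (f x + (⟪gradient f x i, d i⟫ + L i / 2 * ‖d i‖ ^ 2)) := by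
        gcongr with i
        linarith [apply_add_blockEmb_le hf i (hLip i) x (d i)]
    _ = f x + (M : ℝ)⁻¹ * (⟪gradient f x, d⟫ + 1 / 2 * norm1Sq L d) := by
        rw [← Finset.mul_sum, Finset.sum_add_distrib, Finset.sum_add_distrib, Finset.sum_const,
          Finset.card_univ, Fintype.card_fin, nsmul_eq_mul, PiLp.inner_apply (gradient f x) d,
          one_half_mul_norm1Sq]
        field_simp

theorem inner_add_norm1Sq_le (U : (i : Fin M) → Set (EuclideanSpace ℝ (Fin (n i))))
    (hU : ∀ i, Convex ℝ (U i)) {g x w v : FullSpace M n} (hw : ∀ i, w i ∈ U i)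
    (hv : ∀ i, v i ∈ U i)
    (hmin : ∀ i, ∀ y ∈ U i, ⟪g i, w i - x i⟫ + L i / 2 * ‖w i - x i‖ ^ 2 ≤
      ⟪g i, y - x i⟫ + L i / 2 * ‖y - x i‖ ^ 2) :
    ⟪g, w - x⟫ + 1 / 2 * norm1Sq L (w - x) + 1 / 2 * norm1Sq L (v - w) ≤
      ⟪g, v - x⟫ + 1 / 2 * norm1Sq L (v - x) := by
  have key := Finset.sum_le_sum fun i (_ : i ∈ Finset.univ) =>
    (isMinOn_iff.mpr (hmin i)).three_point (hU i) (hw i) (hv i)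
  simp only [Finset.sum_add_distrib] at key
  simpa only [PiLp.inner_apply g, one_half_mul_norm1Sq, PiLp.sub_apply] using key

theorem pcdm_descent (hM : 0 < M) (hconv : ConvexOn ℝ Set.univ f) (hf : Differentiable ℝ f)
    (hL : ∀ i, 0 ≤ L i)
    (hLip : ∀ (i : Fin M) (u : FullSpace M n) (h : EuclideanSpace ℝ (Fin (n i))),
      ‖gradient f (u + blockEmb i h) i - gradient f u i‖ ≤ L i * ‖h‖)
    (U : (i : Fin M) → Set (EuclideanSpace ℝ (Fin (n i)))) (hU : ∀ i, Convex ℝ (U i))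
    {x w v : FullSpace M n} (hw : ∀ i, w i ∈ U i) (hv : ∀ i, v i ∈ U i)
    (hmin : ∀ i, ∀ y ∈ U i,
      ⟪gradient f x i, w i - x i⟫ + L i / 2 * ‖w i - x i‖ ^ 2 ≤
        ⟪gradient f x i, y - x i⟫ + L i / 2 * ‖y - x i‖ ^ 2) :
    1 / 2 * norm1Sq L (x + (M : ℝ)⁻¹ • (w - x) - v) + f (x + (M : ℝ)⁻¹ • (w - x)) ≤
      1 / 2 * norm1Sq L (x - v) + f x - (M : ℝ)⁻¹ * ⟪gradient f x, x - v⟫ := by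
  set t : ℝ := (M : ℝ)⁻¹
  have ht : 0 ≤ t := by positivity
  have ht1 : t ≤ 1 := inv_le_one_of_one_le₀ (by exact_mod_cast hM)
  have hdist : norm1Sq L (x + t • (w - x) - v) = (1 - t) * norm1Sq L (x - v) +
      t * norm1Sq L (w - v) - t * (1 - t) * norm1Sq L (w - x) := by
    rw [show x + t • (w - x) - v = (1 - t) • (x - v) + t • (w - v) by module,
      norm1Sq_smul_add_smul, sub_sub_sub_cancel_right, norm1Sq_sub_comm L x w]
  have hdesc := apply_add_inv_smul_le hM hconv hf hLip x (w - x)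
  have hprox := inner_add_norm1Sq_le U hU hw hv hmin
  have hC := mul_nonneg (mul_nonneg ht (sub_nonneg.mpr ht1)) (norm1Sq_nonneg hL (w - x))
  rw [norm1Sq_sub_comm L v w, norm1Sq_sub_comm L v x, ← neg_sub x v, inner_neg_right] at hprox
  rw [hdist]
  nlinarith [mul_le_mul_of_nonneg_left hprox ht]

theorem pcdm_lyapunov_contraction (hM : 0 < M) (hconv : ConvexOn ℝ Set.univ f)
    (hf : Differentiable ℝ f) (hL : ∀ i, 0 ≤ L i)
    (hLip : ∀ (i : Fin M) (u : FullSpace M n) (h : EuclideanSpace ℝ (Fin (n i))),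
      ‖gradient f (u + blockEmb i h) i - gradient f u i‖ ≤ L i * ‖h‖)
    {σ : ℝ} (hσ : 0 < σ) (hσ1 : σ ≤ 1)
    (hsc : ∀ y z : FullSpace M n, f y ≥ f z + ⟪gradient f z, y - z⟫ + σ / 2 * norm1Sq L (y - z))
    (U : (i : Fin M) → Set (EuclideanSpace ℝ (Fin (n i)))) (hU : ∀ i, Convex ℝ (U i))
    {x w ustar : FullSpace M n} (hstarU : ∀ i, ustar i ∈ U i)
    (hstarmin : ∀ y : FullSpace M n, (∀ i, y i ∈ U i) → f ustar ≤ f y)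
    (hx : ∀ i, x i ∈ U i) (hw : ∀ i, w i ∈ U i)
    (hmin : ∀ i, ∀ y ∈ U i,
      ⟪gradient f x i, w i - x i⟫ + L i / 2 * ‖w i - x i‖ ^ 2 ≤
        ⟪gradient f x i, y - x i⟫ + L i / 2 * ‖y - x i‖ ^ 2) :
    1 / 2 * norm1Sq L (x + (M : ℝ)⁻¹ • (w - x) - ustar) + f (x + (M : ℝ)⁻¹ • (w - x)) - f ustar ≤
      (1 - 2 * σ / ((M : ℝ) * (1 + σ))) * (1 / 2 * norm1Sq L (x - ustar) + f x - f ustar) := by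
  set S := norm1Sq L (x - ustar)
  have hS : 0 ≤ S := norm1Sq_nonneg hL _
  have hopt : 0 ≤ ⟪gradient f ustar, x - ustar⟫ :=
    (isMinOn_iff.mpr hstarmin).inner_gradient_sub_nonneg (convex_setOf_forall_apply_mem hU)
      hstarU hx (hf ustar)
  have hgrowth : σ / 2 * S ≤ f x - f ustar := by linarith [hsc x ustar]
  have hgap : f x - f ustar + σ / 2 * S ≤ ⟪gradient f x, x - ustar⟫ := by
    have h := hsc ustar x
    rw [norm1Sq_sub_comm, ← neg_sub x ustar, inner_neg_right] at h
    linarith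
  -- `2σ/(1+σ)` is the largest `λ` with `λ (S/2 + a) ≤ a + σS/2` whenever `σS/2 ≤ a`
  have hmix : 2 * σ / (1 + σ) * (1 / 2 * S + f x - f ustar) ≤ f x - f ustar + σ / 2 * S := by
    rw [div_mul_eq_mul_div, div_le_iff₀ (by positivity)]
    nlinarith [mul_nonneg (sub_nonneg.mpr hσ1) (sub_nonneg.mpr hgrowth)]
  calc _ ≤ 1 / 2 * S + f x - f ustar - (M : ℝ)⁻¹ * ⟪gradient f x, x - ustar⟫ := by
        linarith [pcdm_descent hM hconv hf hL hLip U hU hw hstarU hmin]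
    _ ≤ 1 / 2 * S + f x - f ustar -
          (M : ℝ)⁻¹ * (2 * σ / (1 + σ) * (1 / 2 * S + f x - f ustar)) := by
        gcongr
        linarith
    _ = _ := by field_simp

end FullSpace

theorem pcdm_linear_rate_general {M : ℕ} {n : Fin M → ℕ} (hM : 0 < M)
    (f : FullSpace M n → ℝ) (hconv : ConvexOn ℝ Set.univ f) (hf : Differentiable ℝ f)
    (L : Fin M → ℝ) (hL : ∀ i, 0 < L i)
    (hLip : ∀ (i : Fin M) (u : FullSpace M n) (h : EuclideanSpace ℝ (Fin (n i))),
      ‖gradient f (u + blockEmb i h) i - gradient f u i‖ ≤ L i * ‖h‖)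
    (σ₁ : ℝ) (hσ₁ : 0 < σ₁ ∧ σ₁ ≤ 1)
    (hsc : ∀ w v : FullSpace M n,
      f w ≥ f v + ⟪gradient f v, w - v⟫ + σ₁ / 2 * norm1Sq L (w - v))
    (U : (i : Fin M) → Set (EuclideanSpace ℝ (Fin (n i))))
    (hUconvex : ∀ i, Convex ℝ (U i))
    (ustar : FullSpace M n) (hstarU : ∀ i, ustar i ∈ U i)
    (hstarmin : ∀ w : FullSpace M n, (∀ i, w i ∈ U i) → f ustar ≤ f w)
    (u : ℕ → FullSpace M n) (h0 : ∀ i, u 0 i ∈ U i)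
    (vbar : ℕ → (i : Fin M) → EuclideanSpace ℝ (Fin (n i)))
    (hvbarU : ∀ k i, vbar k i ∈ U i)
    (hmin : ∀ k i, ∀ v ∈ U i,
      ⟪gradient f (u k) i, vbar k i - u k i⟫ + L i / 2 * ‖vbar k i - u k i‖ ^ 2 ≤
        ⟪gradient f (u k) i, v - u k i⟫ + L i / 2 * ‖v - u k i‖ ^ 2)
    (hupd : ∀ k i,
      u (k + 1) i = (1 / (M : ℝ)) • vbar k i + (((M : ℝ) - 1) / (M : ℝ)) • u k i) :
    ∀ k : ℕ, f (u k) - f ustar ≤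
      (1 - 2 * σ₁ / ((M : ℝ) * (1 + σ₁))) ^ k *
        (1 / 2 * norm1Sq L (u 0 - ustar) + f (u 0) - f ustar) := by
  obtain ⟨hσ, hσ1⟩ := hσ₁
  have hL0 : ∀ i, 0 ≤ L i := fun i => (hL i).le
  have hfeas := FullSpace.pcdm_iterate_mem hM hUconvex h0 hvbarU hupd
  set Φ : ℕ → ℝ := fun k => 1 / 2 * norm1Sq L (u k - ustar) + f (u k) - f ustar
  have hcontract : ∀ k, Φ (k + 1) ≤ (1 - 2 * σ₁ / ((M : ℝ) * (1 + σ₁))) * Φ k := fun k => by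
    have h := FullSpace.pcdm_lyapunov_contraction hM hconv hf hL0 hLip hσ hσ1 hsc U hUconvex
      (w := WithLp.toLp 2 (vbar k)) hstarU hstarmin (hfeas k) (hvbarU k) (hmin k)
    rwa [← FullSpace.pcdm_update_eq hM (hupd k)] at h
  have hρ : 0 ≤ 1 - 2 * σ₁ / ((M : ℝ) * (1 + σ₁)) := by
    have hM1 : (1 : ℝ) ≤ M := by exact_mod_cast hM
    rw [sub_nonneg, div_le_one (by positivity)]
    nlinarith
  intro k
  calc f (u k) - f ustar ≤ Φ k := by
        simp only [Φ]
        linarith [FullSpace.norm1Sq_nonneg hL0 (u k - ustar)]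
    _ ≤ _ := le_geom hρ k fun j _ => hcontract j

/-- Theorem 2: linear convergence rate of PCDM under strong convexity. -/
theorem pcdm_linear_rate {M : ℕ} {n : Fin M → ℕ} (hM : 0 < M)
    (f : FullSpace M n → ℝ) (hconv : ConvexOn ℝ Set.univ f) (hf : Differentiable ℝ f)
    (L : Fin M → ℝ) (hL : ∀ i, 0 < L i)
    (hLip : ∀ (i : Fin M) (u : FullSpace M n) (h : EuclideanSpace ℝ (Fin (n i))),
      ‖gradient f (u + blockEmb i h) i - gradient f u i‖ ≤ L i * ‖h‖)
    (σ₁ : ℝ) (hσ₁ : 0 < σ₁ ∧ σ₁ ≤ 1)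
    (hsc : ∀ w v : FullSpace M n,
      f w ≥ f v + ⟪gradient f v, w - v⟫ + σ₁ / 2 * norm1Sq L (w - v))
    (U : (i : Fin M) → Set (EuclideanSpace ℝ (Fin (n i))))
    (hUclosed : ∀ i, IsClosed (U i)) (hUconvex : ∀ i, Convex ℝ (U i))
    (ustar : FullSpace M n) (hstarU : ∀ i, ustar i ∈ U i)
    (hstarmin : ∀ w : FullSpace M n, (∀ i, w i ∈ U i) → f ustar ≤ f w)
    (u : ℕ → FullSpace M n) (h0 : ∀ i, u 0 i ∈ U i)
    (vbar : ℕ → (i : Fin M) → EuclideanSpace ℝ (Fin (n i)))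
    (hvbarU : ∀ k i, vbar k i ∈ U i)
    (hmin : ∀ k i, ∀ v ∈ U i,
      ⟪gradient f (u k) i, vbar k i - u k i⟫ + L i / 2 * ‖vbar k i - u k i‖ ^ 2 ≤
        ⟪gradient f (u k) i, v - u k i⟫ + L i / 2 * ‖v - u k i‖ ^ 2)
    (hupd : ∀ k i,
      u (k + 1) i = (1 / (M : ℝ)) • vbar k i + (((M : ℝ) - 1) / (M : ℝ)) • u k i) :
    ∀ k : ℕ, f (u k) - f ustar ≤
      (1 - 2 * σ₁ / ((M : ℝ) * (1 + σ₁))) ^ k *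
        (1 / 2 * norm1Sq L (u 0 - ustar) + f (u 0) - f ustar) :=
  pcdm_linear_rate_general hM f hconv hf L hL hLip σ₁ hσ₁ hsc U hUconvex ustar hstarU hstarmin u h0
    vbar hvbarU hmin hupd
end
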